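/- arXiv:2205.03991 — 2 statements merged into one kernel-verified Lean document; each statement's English description precedes it below -/
import Mathlib

section
/- Let V be a finite set, c ≥ 2, Ω : V×V → ℝ symmetric with 0 ≤ Ω(x,y) ≤ 1. Let (S^k) ⊂ W be defined by S^{k+1} = exp_{S^k}(θ_k·d(S^k,h_k)) where, for all k, h_k·|⟨R_{S^k}(ΩS^k), Ω·R_{S^k}(ΩS^k)⟩| < ‖R_{S^k}(ΩS^k)‖²_{S^k} with h_k > 0, the Armijo condition J(S^{k+1}) − J(S^k) ≤ c₁·θ_k·⟨grad_g J(S^k), R_{S^k}(d(S^k,h_k))⟩_{S^k} holds with a fixed c₁ ∈ (0,1), and θ_k → θ* for some θ* > 0. Then every limit point S* ∈ W̄ of (S^k) is an equilibrium of the flow Ṡ = R_S(ΩS), i.e., R_{S*(x)}((ΩS*)(x)) = 0 for all x ∈ V. -/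
open Finset Filter Topology

noncomputable section

variable {V : Type*} [Fintype V] {c : ℕ}

/-- `(Ω S)(x)_j = ∑_y Ω x y * S y j`. -/
def omApp (Ω : V → V → ℝ) (S : V → Fin c → ℝ) (x : V) (j : Fin c) : ℝ :=
  ∑ y, Ω x y * S y j

/-- Replicator map `R_p u = Diag(p)u − ⟨p,u⟩p`. -/
def repl (p u : Fin c → ℝ) (j : Fin c) : ℝ :=
  p j * u j - (∑ i, p i * u i) * p j

/-- Lifting map `exp_p(v) = (p ⊙ e^v)/⟨p, e^v⟩`. -/
def liftMap (p v : Fin c → ℝ) (j : Fin c) : ℝ :=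
  p j * Real.exp (v j) / (∑ i, p i * Real.exp (v i))

/-- Orthogonal projection `Π₀ u = u − (⟨1,u⟩/c)·1`. -/
def proj0 {c : ℕ} (u : Fin c → ℝ) (j : Fin c) : ℝ :=
  u j - (∑ i, u i) / (c : ℝ)

/-- The potential `J(S) = −½ ∑_x ⟨S(x), (ΩS)(x)⟩`. -/
def Jpot (Ω : V → V → ℝ) (S : V → Fin c → ℝ) : ℝ :=
  -(1 / 2) * ∑ x, ∑ j, S x j * omApp Ω S x j

/-- Fisher–Rao inner product `⟨U,W⟩_S = ∑_{x,j} U_j(x) W_j(x) / S_j(x)`. -/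
def frIP (S U W : V → Fin c → ℝ) : ℝ :=
  ∑ x, ∑ j, U x j * W x j / S x j

/-- Riemannian gradient `grad_g J(S) = −R_S(ΩS)`. -/
def gradJ (Ω : V → V → ℝ) (S : V → Fin c → ℝ) (x : V) (j : Fin c) : ℝ :=
  - repl (S x) (omApp Ω S x) j

/-- The vector field `R_S(ΩS)`. -/
def RSOm (Ω : V → V → ℝ) (S : V → Fin c → ℝ) (x : V) (j : Fin c) : ℝ :=
  repl (S x) (omApp Ω S x) j

/-- Descent direction `d(S,h) = Π₀(ΩS + (h/2)·Ω·R_S(ΩS))`. -/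
def dDir (Ω : V → V → ℝ) (S : V → Fin c → ℝ) (h : ℝ) (x : V) (j : Fin c) : ℝ :=
  proj0 (fun i => omApp Ω S x i + (h / 2) * omApp Ω (RSOm Ω S) x i) j

/-! ### Auxiliary lemmas -/

lemma sum_repl_eq_zero {c : ℕ} (p u : Fin c → ℝ) (hp : ∑ j, p j = 1) :
    ∑ j, repl p u j = 0 := by
  simp only [repl, Finset.sum_sub_distrib]
  rw [← Finset.mul_sum, hp, mul_one, sub_self]

lemma repl_mul_div {c : ℕ} (p u v : Fin c → ℝ) (hpos : ∀ j, 0 < p j)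
    (hp : ∑ j, p j = 1) :
    ∑ j, repl p u j * repl p v j / p j = ∑ j, repl p u j * v j := by
  have h1 : ∀ j, repl p u j * repl p v j / p j
      = repl p u j * v j - repl p u j * (∑ i, p i * v i) := by
    intro j
    have hne := (hpos j).ne'
    have h2 : repl p v j = p j * (v j - ∑ i, p i * v i) := by rw [repl]; ring
    rw [h2]; field_simp
  simp only [h1]
  rw [Finset.sum_sub_distrib, ← Finset.sum_mul, sum_repl_eq_zero p u hp, zero_mul, sub_zero]

lemma repl_mul_proj0 {c : ℕ} (p u w : Fin c → ℝ) (hp : ∑ j, p j = 1) :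
    ∑ j, repl p u j * proj0 w j = ∑ j, repl p u j * w j := by
  simp only [proj0, mul_sub, Finset.sum_sub_distrib, ← Finset.sum_mul,
    sum_repl_eq_zero p u hp, zero_mul, sub_zero]

lemma key_ident (Ω : V → V → ℝ) (S : V → Fin c → ℝ) (h : ℝ)
    (hpos : ∀ x j, 0 < S x j) (hsum : ∀ x, ∑ j, S x j = 1) :
    frIP S (gradJ Ω S) (fun x => repl (S x) (dDir Ω S h x))
      = -(frIP S (RSOm Ω S) (RSOm Ω S)
          + (h / 2) * ∑ x, ∑ j, RSOm Ω S x j * omApp Ω (RSOm Ω S) x j) := by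
  unfold frIP
  have hx : ∀ x : V, ∑ j, gradJ Ω S x j * repl (S x) (dDir Ω S h x) j / S x j
      = -(∑ j, RSOm Ω S x j * RSOm Ω S x j / S x j
          + (h / 2) * ∑ j, RSOm Ω S x j * omApp Ω (RSOm Ω S) x j) := by
    intro x
    have e1 : ∑ j, gradJ Ω S x j * repl (S x) (dDir Ω S h x) j / S x j
        = -∑ j, repl (S x) (omApp Ω S x) j * repl (S x) (dDir Ω S h x) j / S x j := by
      rw [← Finset.sum_neg_distrib]
      refine Finset.sum_congr rfl fun j _ => ?_
      simp [gradJ, neg_div]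
    rw [e1, repl_mul_div _ _ _ (hpos x) (hsum x)]
    have e2 : ∑ j, repl (S x) (omApp Ω S x) j * dDir Ω S h x j
        = ∑ j, repl (S x) (omApp Ω S x) j *
            (omApp Ω S x j + (h / 2) * omApp Ω (RSOm Ω S) x j) := by
      have := repl_mul_proj0 (S x) (omApp Ω S x)
        (fun i => omApp Ω S x i + (h / 2) * omApp Ω (RSOm Ω S) x i) (hsum x)
      simpa [dDir] using this
    rw [e2]
    have e3 : ∑ j, RSOm Ω S x j * RSOm Ω S x j / S x j
        = ∑ j, repl (S x) (omApp Ω S x) j * omApp Ω S x j :=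
      repl_mul_div _ _ _ (hpos x) (hsum x)
    rw [e3]
    simp only [RSOm, mul_add, Finset.sum_add_distrib, Finset.mul_sum]
    ring_nf
    congr 1
    refine Finset.sum_congr rfl fun j _ => ?_
    ring
  rw [Finset.sum_congr rfl fun x _ => hx x]
  rw [Finset.sum_neg_distrib, Finset.sum_add_distrib, ← Finset.mul_sum]

lemma Jpot_ge (Ω : V → V → ℝ) (hnn : ∀ x y, 0 ≤ Ω x y) (hub : ∀ x y, Ω x y ≤ 1)
    (S : V → Fin c → ℝ) (hS : ∀ x, (∀ j, 0 ≤ S x j) ∧ ∑ j, S x j = 1) :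
    -((Fintype.card V : ℝ) ^ 2) ≤ Jpot Ω S := by
  have h1 : ∀ y j, S y j ≤ 1 := fun y j =>
    (hS y).2 ▸ Finset.single_le_sum (fun i _ => (hS y).1 i) (Finset.mem_univ j)
  have hom : ∀ x j, omApp Ω S x j ≤ (Fintype.card V : ℝ) := by
    intro x j
    calc omApp Ω S x j ≤ ∑ _y : V, (1 : ℝ) :=
          Finset.sum_le_sum fun y _ => mul_le_one₀ (hub x y) ((hS y).1 j) (h1 y j)
      _ = (Fintype.card V : ℝ) := by simp
  have hT : ∑ x, ∑ j, S x j * omApp Ω S x j ≤ (Fintype.card V : ℝ) ^ 2 := by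
    have hx : ∀ x : V, ∑ j, S x j * omApp Ω S x j ≤ (Fintype.card V : ℝ) := by
      intro x
      calc ∑ j, S x j * omApp Ω S x j
          ≤ ∑ j, S x j * (Fintype.card V : ℝ) :=
            Finset.sum_le_sum fun j _ =>
              mul_le_mul_of_nonneg_left (hom x j) ((hS x).1 j)
        _ = (Fintype.card V : ℝ) := by
            rw [← Finset.sum_mul, (hS x).2, one_mul]
    calc ∑ x, ∑ j, S x j * omApp Ω S x j
        ≤ ∑ _x : V, (Fintype.card V : ℝ) := Finset.sum_le_sum fun x _ => hx x
      _ = (Fintype.card V : ℝ) ^ 2 := by simp [sq]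
  have hcard : (0 : ℝ) ≤ (Fintype.card V : ℝ) ^ 2 := by positivity
  unfold Jpot
  nlinarith

theorem statement10 {V : Type*} [Fintype V] {c : ℕ} (hc : 2 ≤ c)
    (Ω : V → V → ℝ) (hsymm : ∀ x y, Ω x y = Ω y x)
    (hnn : ∀ x y, 0 ≤ Ω x y) (hub : ∀ x y, Ω x y ≤ 1)
    (S : ℕ → V → Fin c → ℝ)
    (hSW : ∀ k x, (∀ j, 0 < S k x j) ∧ ∑ j, S k x j = 1)
    (θ h : ℕ → ℝ)
    (hrec : ∀ k x, S (k + 1) x = liftMap (S k x) (fun j => θ k * dDir Ω (S k) (h k) x j))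
    (hhpos : ∀ k, 0 < h k)
    (hstep : ∀ k, h k * |∑ x, ∑ j, RSOm Ω (S k) x j * omApp Ω (RSOm Ω (S k)) x j|
        < frIP (S k) (RSOm Ω (S k)) (RSOm Ω (S k)))
    (c₁ : ℝ) (hc₁ : 0 < c₁ ∧ c₁ < 1)
    (harmijo : ∀ k, Jpot Ω (S (k + 1)) - Jpot Ω (S k)
        ≤ c₁ * θ k *
          frIP (S k) (gradJ Ω (S k)) (fun x => repl (S k x) (dDir Ω (S k) (h k) x)))
    (θstar : ℝ) (hθpos : 0 < θstar)
    (hθ : Filter.Tendsto θ Filter.atTop (nhds θstar)) :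
    ∀ Sstar : V → Fin c → ℝ,
      (∀ x, (∀ j, 0 ≤ Sstar x j) ∧ ∑ j, Sstar x j = 1) →
      (∃ φ : ℕ → ℕ, StrictMono φ ∧
        Filter.Tendsto (fun n => S (φ n)) Filter.atTop (nhds Sstar)) →
      ∀ x j, repl (Sstar x) (omApp Ω Sstar x) j = 0 := by
  obtain ⟨hc₁pos, _⟩ := hc₁
  rintro Sstar hSstar ⟨φ, hφ, hconv⟩
  -- Notation
  set A : ℕ → ℝ := fun k => frIP (S k) (RSOm Ω (S k)) (RSOm Ω (S k)) with hAdef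
  set B : ℕ → ℝ :=
    fun k => ∑ x, ∑ j, RSOm Ω (S k) x j * omApp Ω (RSOm Ω (S k)) x j with hBdef
  set Q : ℕ → ℝ := fun k =>
    frIP (S k) (gradJ Ω (S k)) (fun x => repl (S k x) (dDir Ω (S k) (h k) x)) with hQdef
  have hQeq : ∀ k, Q k = -(A k + (h k / 2) * B k) := fun k =>
    key_ident Ω (S k) (h k) (fun x => (hSW k x).1) (fun x => (hSW k x).2)
  have hApos : ∀ k, 0 ≤ A k := by
    intro k
    refine Finset.sum_nonneg fun x _ => Finset.sum_nonneg fun j _ => ?_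
    exact div_nonneg (mul_self_nonneg _) ((hSW k x).1 j).le
  have hQle : ∀ k, Q k ≤ -(A k / 2) := by
    intro k
    rw [hQeq k]
    have h1 : h k * (-|B k|) ≤ h k * B k :=
      mul_le_mul_of_nonneg_left (neg_abs_le (B k)) (hhpos k).le
    have h2 : h k * |B k| < A k := hstep k
    nlinarith
  -- Eventually θ is bounded below by θstar/2
  have hev : ∀ᶠ k in atTop, θstar / 2 < θ k :=
    hθ.eventually (eventually_gt_nhds (by linarith))
  obtain ⟨N, hN⟩ := eventually_atTop.mp hev
  have hθNpos : ∀ k, N ≤ k → 0 < θ k := fun k hk => lt_trans (by linarith) (hN k hk)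
  -- J is bounded below and eventually decreasing
  set f : ℕ → ℝ := fun k => Jpot Ω (S k) with hfdef
  have hJlb : ∀ k, -((Fintype.card V : ℝ) ^ 2) ≤ f k := fun k =>
    Jpot_ge Ω hnn hub (S k) fun x => ⟨fun j => ((hSW k x).1 j).le, (hSW k x).2⟩
  have hEk : ∀ k, N ≤ k → c₁ * θ k * Q k ≤ 0 := by
    intro k hk
    have h1 : 0 < c₁ * θ k := mul_pos hc₁pos (hθNpos k hk)
    nlinarith [hQle k, hApos k]
  have hmono : ∀ k, N ≤ k → f (k + 1) ≤ f k := by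
    intro k hk
    have := harmijo k
    have h2 := hEk k hk
    simp only [hfdef]
    linarith
  -- convergence of f
  set g : ℕ → ℝ := fun n => f (n + N) with hgdef
  have hganti : Antitone g := by
    refine antitone_nat_of_succ_le fun n => ?_
    have := hmono (n + N) (by omega)
    simpa [hgdef, Nat.add_right_comm] using this
  have hbdd : BddBelow (Set.range g) :=
    ⟨-((Fintype.card V : ℝ) ^ 2), by rintro _ ⟨n, rfl⟩; exact hJlb _⟩
  have hg : Tendsto g atTop (𝓝 (⨅ n, g n)) := tendsto_atTop_ciInf hganti hbdd
  have hf : Tendsto f atTop (𝓝 (⨅ n, g n)) := (tendsto_add_atTop_iff_nat N).mp hg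
  have hdiff : Tendsto (fun k => f (k + 1) - f k) atTop (𝓝 0) := by
    have h1 : Tendsto (fun k => f (k + 1)) atTop (𝓝 (⨅ n, g n)) :=
      (tendsto_add_atTop_iff_nat 1).mpr hf
    simpa using h1.sub hf
  -- the Armijo bound squeezes c₁ θ Q to 0
  have hE : Tendsto (fun k => c₁ * θ k * Q k) atTop (𝓝 0) := by
    refine tendsto_of_tendsto_of_tendsto_of_le_of_le' hdiff tendsto_const_nhds
      (Eventually.of_forall fun k => ?_) (eventually_atTop.mpr ⟨N, hEk⟩)
    exact harmijo k
  -- squeeze (c₁ θ / 2) A to 0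
  have hG : Tendsto (fun k => c₁ * θ k / 2 * A k) atTop (𝓝 0) := by
    have hneg : Tendsto (fun k => -(c₁ * θ k * Q k)) atTop (𝓝 0) := by
      simpa using hE.neg
    refine tendsto_of_tendsto_of_tendsto_of_le_of_le' tendsto_const_nhds hneg
      (eventually_atTop.mpr ⟨N, fun k hk => ?_⟩)
      (eventually_atTop.mpr ⟨N, fun k hk => ?_⟩)
    · have h1 : 0 < c₁ * θ k := mul_pos hc₁pos (hθNpos k hk)
      have := hApos k
      nlinarith
    · have h1 : 0 ≤ c₁ * θ k := (mul_pos hc₁pos (hθNpos k hk)).le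
      have h2 := mul_le_mul_of_nonneg_left (hQle k) h1
      nlinarith
  -- hence A → 0
  have hAten : Tendsto A atTop (𝓝 0) := by
    have hne : c₁ * θstar ≠ 0 := by positivity
    have hdiv : Tendsto (fun k => 2 / (c₁ * θ k)) atTop (𝓝 (2 / (c₁ * θstar))) :=
      tendsto_const_nhds.div (hθ.const_mul c₁) hne
    have hmul : Tendsto (fun k => c₁ * θ k / 2 * A k * (2 / (c₁ * θ k))) atTop (𝓝 0) := by
      simpa using hG.mul hdiv
    refine hmul.congr' (eventually_atTop.mpr ⟨N, fun k hk => ?_⟩)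
    have h1 : θ k ≠ 0 := (hθNpos k hk).ne'
    field_simp
  -- squared Euclidean norm of the replicator field
  set F : ℕ → ℝ := fun k => ∑ x, ∑ j, RSOm Ω (S k) x j * RSOm Ω (S k) x j with hFdef
  have hFA : ∀ k, F k ≤ A k := by
    intro k
    refine Finset.sum_le_sum fun x _ => Finset.sum_le_sum fun j _ => ?_
    have hle1 : S k x j ≤ 1 :=
      (hSW k x).2 ▸ Finset.single_le_sum (fun i _ => ((hSW k x).1 i).le) (Finset.mem_univ j)
    rw [le_div_iff₀ ((hSW k x).1 j)]
    exact mul_le_of_le_one_right (mul_self_nonneg _) hle1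
  have hFnn : ∀ k, 0 ≤ F k := fun k =>
    Finset.sum_nonneg fun x _ => Finset.sum_nonneg fun j _ => mul_self_nonneg _
  have hFten : Tendsto F atTop (𝓝 0) :=
    tendsto_of_tendsto_of_tendsto_of_le_of_le tendsto_const_nhds hAten
      hFnn hFA
  -- continuity of the squared norm as a function of the configuration
  set Fc : (V → Fin c → ℝ) → ℝ := fun T =>
    ∑ x, ∑ j, repl (T x) (omApp Ω T x) j * repl (T x) (omApp Ω T x) j with hFcdef
  have hFcont : Continuous Fc := by
    simp only [hFcdef]
    unfold repl omApp
    fun_prop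
  have hlim1 : Tendsto (fun n => Fc (S (φ n))) atTop (𝓝 (Fc Sstar)) :=
    (hFcont.tendsto Sstar).comp hconv
  have hlim2 : Tendsto (fun n => Fc (S (φ n))) atTop (𝓝 0) := by
    have : Tendsto (fun n => F (φ n)) atTop (𝓝 0) := hFten.comp hφ.tendsto_atTop
    exact this
  have hFc0 : Fc Sstar = 0 := tendsto_nhds_unique hlim1 hlim2
  -- conclude pointwise vanishing
  have h1 := (Finset.sum_eq_zero_iff_of_nonneg fun x _ =>
    Finset.sum_nonneg fun j _ => mul_self_nonneg _).mp hFc0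
  intro x j
  have h2 := (Finset.sum_eq_zero_iff_of_nonneg fun j _ =>
    mul_self_nonneg _).mp (h1 x (Finset.mem_univ x)) j (Finset.mem_univ j)
  exact mul_self_eq_zero.mp h2
end
end

section
/- Let V be a finite set, c ≥ 2, Ω : V×V → ℝ symmetric with 0 ≤ Ω(x,y) ≤ 1. Let (S^k) ⊂ W be defined by S^{k+1} = exp_{S^k}(θ_k·d(S^k,h_k)) where, for all k, h_k > 0 with h_k·|⟨R_{S^k}(ΩS^k), Ω·R_{S^k}(ΩS^k)⟩| < ‖R_{S^k}(ΩS^k)‖²_{S^k}, the Armijo condition J(S^{k+1}) − J(S^k) ≤ c₁·θ_k·⟨grad_g J(S^k), R_{S^k}(d(S^k,h_k))⟩_{S^k} holds with a fixed c₁ ∈ (0,1), θ_k → θ* > 0, and in addition Σ_{k≥0} h_k < ∞. Then ‖grad_g J(S^k)‖ → 0 as k → ∞, where ‖·‖ is the Euclidean (Frobenius) norm. -/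
open Finset Filter Topology

noncomputable section

variable {V : Type*} [Fintype V] {c : ℕ}

lemma sum_repl {c : ℕ} (p u : Fin c → ℝ) (hp1 : ∑ j, p j = 1) : ∑ j, repl p u j = 0 := by
  simp [repl, Finset.sum_sub_distrib, ← Finset.mul_sum, ← Finset.sum_mul, hp1]

lemma repl_mul_repl_div {c : ℕ} (p a w : Fin c → ℝ) (hp : ∀ j, 0 < p j)
    (hp1 : ∑ j, p j = 1) :
    ∑ j, repl p a j * repl p w j / p j = ∑ j, repl p a j * w j := by
  have h1 : ∀ j, repl p a j * repl p w j / p j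
      = repl p a j * w j - (∑ i, p i * w i) * repl p a j := by
    intro j
    have hpj := (hp j).ne'
    rw [show repl p w j = p j * (w j - ∑ i, p i * w i) by rw [repl]; ring]
    field_simp
  rw [Finset.sum_congr rfl fun j _ => h1 j, Finset.sum_sub_distrib, ← Finset.mul_sum,
    sum_repl p a hp1, mul_zero, sub_zero]

lemma repl_proj0 {c : ℕ} (p v : Fin c → ℝ) (hp1 : ∑ j, p j = 1) (j : Fin c) :
    repl p (proj0 v) j = repl p v j := by
  simp only [repl, proj0]
  rw [show ∑ i, p i * (v i - (∑ i, v i) / c) = ∑ i, p i * v i - ((∑ i, v i) / c) * ∑ i, p i by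
    rw [Finset.mul_sum, ← Finset.sum_sub_distrib]; exact Finset.sum_congr rfl fun i _ => by ring,
    hp1]
  ring

lemma repl_add_smul {c : ℕ} (p u v : Fin c → ℝ) (s : ℝ) (j : Fin c) :
    repl p (fun i => u i + s * v i) j = repl p u j + s * repl p v j := by
  simp only [repl]
  rw [show ∑ i, p i * (u i + s * v i) = (∑ i, p i * u i) + s * ∑ i, p i * v i by
    rw [Finset.mul_sum, ← Finset.sum_add_distrib]; exact Finset.sum_congr rfl fun i _ => by ring]
  ring
theorem statement12 {V : Type*} [Fintype V] {c : ℕ} (hc : 2 ≤ c)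
    (Ω : V → V → ℝ) (hsymm : ∀ x y, Ω x y = Ω y x)
    (hnn : ∀ x y, 0 ≤ Ω x y) (hub : ∀ x y, Ω x y ≤ 1)
    (S : ℕ → V → Fin c → ℝ)
    (hSW : ∀ k x, (∀ j, 0 < S k x j) ∧ ∑ j, S k x j = 1)
    (θ h : ℕ → ℝ)
    (hrec : ∀ k x, S (k + 1) x = liftMap (S k x) (fun j => θ k * dDir Ω (S k) (h k) x j))
    (hhpos : ∀ k, 0 < h k)
    (hstep : ∀ k, h k * |∑ x, ∑ j, RSOm Ω (S k) x j * omApp Ω (RSOm Ω (S k)) x j|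
        < frIP (S k) (RSOm Ω (S k)) (RSOm Ω (S k)))
    (c₁ : ℝ) (hc₁ : 0 < c₁ ∧ c₁ < 1)
    (harmijo : ∀ k, Jpot Ω (S (k + 1)) - Jpot Ω (S k)
        ≤ c₁ * θ k *
          frIP (S k) (gradJ Ω (S k)) (fun x => repl (S k x) (dDir Ω (S k) (h k) x)))
    (θstar : ℝ) (hθpos : 0 < θstar)
    (hθ : Filter.Tendsto θ Filter.atTop (nhds θstar))
    (hsum : Summable h) :
    Filter.Tendsto (fun k => Real.sqrt (∑ x, ∑ j, (gradJ Ω (S k) x j) ^ 2))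
      Filter.atTop (nhds 0) := by
  classical
  set G : ℕ → V → Fin c → ℝ := fun k => RSOm Ω (S k) with hG
  set N : ℕ → ℝ := fun k => frIP (S k) (G k) (G k) with hN
  set B : ℕ → ℝ := fun k => ∑ x, ∑ j, G k x j * omApp Ω (G k) x j with hB
  -- key identity
  have key : ∀ k, frIP (S k) (gradJ Ω (S k)) (fun x => repl (S k x) (dDir Ω (S k) (h k) x))
      = -(N k + (h k / 2) * B k) := by
    intro k
    have hx : ∀ x, ∑ j, gradJ Ω (S k) x j * repl (S k x) (dDir Ω (S k) (h k) x) j / S k x j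
        = -((∑ j, G k x j * G k x j / S k x j)
            + (h k / 2) * ∑ j, G k x j * omApp Ω (G k) x j) := by
      intro x
      obtain ⟨hp, hp1⟩ := hSW k x
      have hrepl : ∀ j, repl (S k x) (dDir Ω (S k) (h k) x) j
          = G k x j + (h k / 2) * repl (S k x) (omApp Ω (G k) x) j := by
        intro j
        rw [show dDir Ω (S k) (h k) x
            = proj0 (fun i => omApp Ω (S k) x i + (h k / 2) * omApp Ω (G k) x i) from rfl,
          repl_proj0 _ _ hp1, repl_add_smul]
        rfl
      have e2 : ∑ j, G k x j * repl (S k x) (omApp Ω (G k) x) j / S k x j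
          = ∑ j, G k x j * omApp Ω (G k) x j :=
        repl_mul_repl_div (S k x) (omApp Ω (S k) x) (omApp Ω (G k) x) hp hp1
      have estep : ∀ j, gradJ Ω (S k) x j * repl (S k x) (dDir Ω (S k) (h k) x) j / S k x j
          = -(G k x j * G k x j / S k x j)
            - (h k / 2) * (G k x j * repl (S k x) (omApp Ω (G k) x) j / S k x j) := by
        intro j
        rw [hrepl j, show gradJ Ω (S k) x j = -(G k x j) from rfl]
        have hpj := (hp j).ne'
        field_simp
        ring
      rw [Finset.sum_congr rfl fun j _ => estep j, Finset.sum_sub_distrib, ← Finset.mul_sum, e2,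
        Finset.sum_neg_distrib]
      ring
    rw [show frIP (S k) (gradJ Ω (S k)) (fun x => repl (S k x) (dDir Ω (S k) (h k) x))
        = ∑ x, ∑ j, gradJ Ω (S k) x j * repl (S k x) (dDir Ω (S k) (h k) x) j / S k x j from rfl,
      Finset.sum_congr rfl fun x _ => hx x, Finset.sum_neg_distrib, Finset.sum_add_distrib,
      ← Finset.mul_sum]
    rfl
  -- positivity of N
  have hNpos : ∀ k, 0 < N k := fun k =>
    lt_of_le_of_lt (mul_nonneg (hhpos k).le (abs_nonneg _)) (hstep k)
  -- N/2 ≤ N + (h/2)B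
  have hhalf : ∀ k, N k / 2 ≤ N k + (h k / 2) * B k := by
    intro k
    have hprod : 0 ≤ h k * (B k + |B k|) :=
      mul_nonneg (hhpos k).le (by linarith [neg_abs_le (B k)])
    have := hstep k
    nlinarith [this, hprod]
  -- eventually θ k ≥ θ*/2
  have hev : ∀ᶠ k in Filter.atTop, θstar / 2 ≤ θ k :=
    hθ.eventually (eventually_ge_nhds (by linarith))
  obtain ⟨K, hK⟩ := Filter.eventually_atTop.1 hev
  set ε : ℝ := c₁ * (θstar / 2) / 2 with hε
  have hεpos : 0 < ε := by
    have := hc₁.1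
    positivity
  have hdec : ∀ k, K ≤ k → Jpot Ω (S (k + 1)) + ε * N k ≤ Jpot Ω (S k) := by
    intro k hk
    have ha := harmijo k
    rw [key k] at ha
    have hθk : θstar / 2 ≤ θ k := hK k hk
    have hθkpos : 0 < θ k := lt_of_lt_of_le (by linarith) hθk
    have t1 : c₁ * (θstar / 2) * (N k / 2) ≤ c₁ * θ k * (N k / 2) :=
      mul_le_mul_of_nonneg_right (mul_le_mul_of_nonneg_left hθk hc₁.1.le)
        (by linarith [hNpos k])
    have t2 : c₁ * θ k * (N k / 2) ≤ c₁ * θ k * (N k + (h k / 2) * B k) :=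
      mul_le_mul_of_nonneg_left (hhalf k) (mul_nonneg hc₁.1.le hθkpos.le)
    have hεN : ε * N k = c₁ * (θstar / 2) * (N k / 2) := by rw [hε]; ring
    nlinarith [ha, t1, t2]
  -- J bounded below
  have hle1 : ∀ k y j, S k y j ≤ 1 := by
    intro k y j
    obtain ⟨hp, hp1⟩ := hSW k y
    calc S k y j ≤ ∑ i, S k y i :=
          Finset.single_le_sum (fun i _ => (hp i).le) (Finset.mem_univ j)
      _ = 1 := hp1
  have hJlb : ∀ k, -((Fintype.card V : ℝ) ^ 2 / 2) ≤ Jpot Ω (S k) := by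
    intro k
    have hTx : ∀ x, ∑ j, S k x j * omApp Ω (S k) x j ≤ (Fintype.card V : ℝ) := by
      intro x
      obtain ⟨hp, hp1⟩ := hSW k x
      calc ∑ j, S k x j * omApp Ω (S k) x j
          ≤ ∑ j, S k x j * (Fintype.card V : ℝ) := by
            refine Finset.sum_le_sum fun j _ => mul_le_mul_of_nonneg_left ?_ (hp j).le
            calc omApp Ω (S k) x j = ∑ y, Ω x y * S k y j := rfl
              _ ≤ ∑ _y : V, (1 : ℝ) := Finset.sum_le_sum fun y _ => by
                  have h1 := ((hSW k y).1 j).le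
                  nlinarith [hub x y, hnn x y, hle1 k y j]
              _ = (Fintype.card V : ℝ) := by simp
        _ = (Fintype.card V : ℝ) := by rw [← Finset.sum_mul, hp1, one_mul]
    have hT : ∑ x, ∑ j, S k x j * omApp Ω (S k) x j ≤ (Fintype.card V : ℝ) ^ 2 := by
      calc ∑ x, ∑ j, S k x j * omApp Ω (S k) x j ≤ ∑ _x : V, (Fintype.card V : ℝ) :=
            Finset.sum_le_sum fun x _ => hTx x
        _ = (Fintype.card V : ℝ) ^ 2 := by
            simp [Finset.sum_const, nsmul_eq_mul, sq]
    rw [Jpot]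
    linarith
  -- monotone convergence of J along the tail
  set g : ℕ → ℝ := fun n => Jpot Ω (S (K + n)) with hg
  have hganti : Antitone g := by
    refine antitone_nat_of_succ_le fun n => ?_
    have hd := hdec (K + n) (Nat.le_add_right K n)
    have hNn := (hNpos (K + n)).le
    show Jpot Ω (S (K + (n + 1))) ≤ Jpot Ω (S (K + n))
    have heq : K + (n + 1) = K + n + 1 := rfl
    rw [heq]
    nlinarith
  have hgbdd : BddBelow (Set.range g) := by
    refine ⟨-((Fintype.card V : ℝ) ^ 2 / 2), ?_⟩
    rintro _ ⟨n, rfl⟩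
    exact hJlb (K + n)
  have hgconv : Filter.Tendsto g Filter.atTop (nhds (⨅ n, g n)) :=
    tendsto_atTop_ciInf hganti hgbdd
  have hgshift : Filter.Tendsto (fun n => g (n + 1)) Filter.atTop (nhds (⨅ n, g n)) :=
    hgconv.comp (tendsto_add_atTop_nat 1)
  have hdiff : Filter.Tendsto (fun n => g n - g (n + 1)) Filter.atTop (nhds 0) := by
    simpa using hgconv.sub hgshift
  have hub' : ∀ n, ε * N (K + n) ≤ g n - g (n + 1) := by
    intro n
    have hd := hdec (K + n) (Nat.le_add_right K n)
    have e1 : g n = Jpot Ω (S (K + n)) := rfl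
    have e2 : g (n + 1) = Jpot Ω (S (K + n + 1)) := rfl
    rw [e1, e2]
    linarith
  have hNdivconv : Filter.Tendsto (fun n => (g n - g (n + 1)) / ε) Filter.atTop (nhds 0) := by
    simpa using hdiff.div_const ε
  have hNconv' : Filter.Tendsto (fun n => N (K + n)) Filter.atTop (nhds 0) := by
    refine squeeze_zero (fun n => (hNpos (K + n)).le) (fun n => ?_) hNdivconv
    rw [le_div_iff₀ hεpos]
    nlinarith [hub' n]
  have hNconv : Filter.Tendsto N Filter.atTop (nhds 0) := by
    have hfe : (fun n => N (K + n)) = fun n => N (n + K) := funext fun n => by rw [Nat.add_comm]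
    rw [hfe] at hNconv'
    exact (Filter.tendsto_add_atTop_iff_nat K).1 hNconv'
  -- Euclidean norm squared is dominated by N
  have hEle : ∀ k, ∑ x, ∑ j, (gradJ Ω (S k) x j) ^ 2 ≤ N k := by
    intro k
    refine Finset.sum_le_sum fun x _ => Finset.sum_le_sum fun j _ => ?_
    obtain ⟨hp, hp1⟩ := hSW k x
    have hgg : (gradJ Ω (S k) x j) ^ 2 = G k x j * G k x j := by
      rw [show gradJ Ω (S k) x j = -(G k x j) from rfl]
      ring
    rw [hgg, le_div_iff₀ (hp j)]
    exact mul_le_of_le_one_right (mul_self_nonneg _) (hle1 k x j)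
  have hE0 : ∀ k, 0 ≤ ∑ x, ∑ j, (gradJ Ω (S k) x j) ^ 2 := fun k =>
    Finset.sum_nonneg fun x _ => Finset.sum_nonneg fun j _ => sq_nonneg _
  have hEconv : Filter.Tendsto (fun k => ∑ x, ∑ j, (gradJ Ω (S k) x j) ^ 2)
      Filter.atTop (nhds 0) := squeeze_zero hE0 hEle hNconv
  simpa using hEconv.sqrt
end
end
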